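/- arXiv:1509.05355 — 2 statements merged into one kernel-verified Lean document; each statement's English description precedes it below -/
import Mathlib

section
/- Let Φ(ξ,η) = ξ₁/|ξ|² − (ξ₁−η₁)/|ξ−η|² − η₁/|η|² for ξ, η ∈ ℝ² with ξ, η, ξ−η nonzero. Then |∇_ξ Φ(ξ,η)| = |η−2ξ|·|η| / (|ξ−η|²·|ξ|²), and consequently the ratio satisfies |∇_ξΦ|/|∇_ηΦ| = (|η−2ξ|·|η|³)/(|ξ−2η|·|ξ|³) whenever additionally ξ ≠ 2η. -/
/-- The β-plane phase function Φ(ξ,η) = ξ₁/|ξ|² − (ξ₁−η₁)/|ξ−η|² − η₁/|η|². -/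
noncomputable def Phi (ξ η : EuclideanSpace ℝ (Fin 2)) : ℝ :=
  ξ 0 / ‖ξ‖ ^ 2 - (ξ 0 - η 0) / ‖ξ - η‖ ^ 2 - η 0 / ‖η‖ ^ 2

/-!
Identify `ℝ²` with `ℂ` by `x ↦ x₁ + i x₂`. Then `x₁ / |x|² = Re (1 / z)`, so `Φ` is the real part
of the holomorphic function `1/z - 1/(z - w) - 1/w`, and the gradient of the real part of a
holomorphic function is the conjugate of its complex derivative. Hence
`|∇_ξ Φ| = |1/(z - w)² - 1/z²| = |z² - (z - w)²| / (|z - w|² |z|²)`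
with `z² - (z - w)² = w (2z - w)`, and symmetrically `|∇_η Φ| = |z - 2w| |z| / (|w|² |z - w|²)`.
-/

open Complex ComplexConjugate

theorem HasGradientAt.comp_linearIsometryEquiv {𝕜 E F : Type*} [RCLike 𝕜]
    [NormedAddCommGroup E] [InnerProductSpace 𝕜 E] [CompleteSpace E]
    [NormedAddCommGroup F] [InnerProductSpace 𝕜 F] [CompleteSpace F]
    {f : F → 𝕜} {g y : F} (e : E ≃ₗᵢ[𝕜] F) (h : HasGradientAt f g y) :
    HasGradientAt (f ∘ e) (e.symm g) (e.symm y) := by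
  rw [hasGradientAt_iff_hasFDerivAt, ← e.apply_symm_apply y] at h
  rw [hasGradientAt_iff_hasFDerivAt]
  refine (h.comp _ e.toContinuousLinearEquiv.hasFDerivAt).congr_fderiv ?_
  ext v
  simp [LinearIsometryEquiv.inner_map_eq_flip]

theorem HasDerivAt.hasGradientAt_re {f : ℂ → ℂ} {f' z : ℂ} (h : HasDerivAt f f' z) :
    HasGradientAt (fun w ↦ (f w).re) (conj f') z := by
  rw [hasGradientAt_iff_hasFDerivAt]
  refine (reCLM.hasFDerivAt.comp z (h.hasFDerivAt.restrictScalars ℝ)).congr_fderiv ?_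
  ext w
  simp [Complex.inner, mul_comm]

theorem norm_inv_sq_sub_inv_sq {K : Type*} [NormedField K] {a b : K} (ha : a ≠ 0) (hb : b ≠ 0) :
    ‖(b ^ 2)⁻¹ - (a ^ 2)⁻¹‖ = ‖a - b‖ * ‖a + b‖ / (‖b‖ ^ 2 * ‖a‖ ^ 2) := by
  rw [inv_sub_inv (pow_ne_zero 2 hb) (pow_ne_zero 2 ha), sq_sub_sq, norm_div, norm_mul, norm_mul,
    norm_pow, norm_pow, mul_comm ‖a + b‖]

noncomputable def PhiC (z w : ℂ) : ℂ := z⁻¹ - (z - w)⁻¹ - w⁻¹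

theorem div_norm_sq_eq_re_inv (z : ℂ) :
    orthonormalBasisOneI.repr z 0 / ‖orthonormalBasisOneI.repr z‖ ^ 2 = (z⁻¹).re := by
  simp [inv_re, normSq_eq_norm_sq]

theorem Phi_eq_re_PhiC (z w : ℂ) :
    Phi (orthonormalBasisOneI.repr z) (orthonormalBasisOneI.repr w) = (PhiC z w).re := by
  simp only [Phi, PhiC, sub_re, ← div_norm_sq_eq_re_inv, map_sub]
  rfl

theorem hasDerivAt_PhiC_left {z w : ℂ} (hz : z ≠ 0) (hzw : z - w ≠ 0) :
    HasDerivAt (fun z' ↦ PhiC z' w) (((z - w) ^ 2)⁻¹ - (z ^ 2)⁻¹) z := by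
  have h := ((hasDerivAt_inv hz).sub
    ((hasDerivAt_inv hzw).comp z ((hasDerivAt_id z).sub_const w))).sub_const w⁻¹
  exact h.congr_deriv (by ring)

theorem hasDerivAt_PhiC_right {z w : ℂ} (hw : w ≠ 0) (hzw : z - w ≠ 0) :
    HasDerivAt (fun w' ↦ PhiC z w') ((w ^ 2)⁻¹ - ((z - w) ^ 2)⁻¹) w := by
  have h := ((hasDerivAt_const w z⁻¹).sub
    ((hasDerivAt_inv hzw).comp w ((hasDerivAt_id w).const_sub z))).sub (hasDerivAt_inv hw)
  exact h.congr_deriv (by ring)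

theorem hasGradientAt_Phi_left {z w : ℂ} (hz : z ≠ 0) (hzw : z - w ≠ 0) :
    HasGradientAt (fun ξ ↦ Phi ξ (orthonormalBasisOneI.repr w))
      (orthonormalBasisOneI.repr (conj (((z - w) ^ 2)⁻¹ - (z ^ 2)⁻¹)))
      (orthonormalBasisOneI.repr z) := by
  have h := (hasDerivAt_PhiC_left hz hzw).hasGradientAt_re.comp_linearIsometryEquiv
    orthonormalBasisOneI.repr.symm
  rw [LinearIsometryEquiv.symm_symm] at h
  convert h using 1
  ext ξ
  rw [Function.comp_apply, ← Phi_eq_re_PhiC, LinearIsometryEquiv.apply_symm_apply]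

theorem hasGradientAt_Phi_right {z w : ℂ} (hw : w ≠ 0) (hzw : z - w ≠ 0) :
    HasGradientAt (fun η ↦ Phi (orthonormalBasisOneI.repr z) η)
      (orthonormalBasisOneI.repr (conj ((w ^ 2)⁻¹ - ((z - w) ^ 2)⁻¹)))
      (orthonormalBasisOneI.repr w) := by
  have h := (hasDerivAt_PhiC_right hw hzw).hasGradientAt_re.comp_linearIsometryEquiv
    orthonormalBasisOneI.repr.symm
  rw [LinearIsometryEquiv.symm_symm] at h
  convert h using 1
  ext η
  rw [Function.comp_apply, ← Phi_eq_re_PhiC, LinearIsometryEquiv.apply_symm_apply]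

theorem norm_gradient_Phi_left {ξ η : EuclideanSpace ℝ (Fin 2)} (hξ : ξ ≠ 0) (hξη : ξ ≠ η) :
    ‖gradient (fun ξ' ↦ Phi ξ' η) ξ‖ = ‖η - (2 : ℝ) • ξ‖ * ‖η‖ / (‖ξ - η‖ ^ 2 * ‖ξ‖ ^ 2) := by
  obtain ⟨z, rfl⟩ := orthonormalBasisOneI.repr.surjective ξ
  obtain ⟨w, rfl⟩ := orthonormalBasisOneI.repr.surjective η
  have hz : z ≠ 0 := by rintro rfl; simp at hξ
  have hzw : z - w ≠ 0 := sub_ne_zero.mpr (by rintro rfl; exact hξη rfl)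
  rw [(hasGradientAt_Phi_left hz hzw).gradient, LinearIsometryEquiv.norm_map, norm_conj,
    norm_inv_sq_sub_inv_sq hz hzw, ← map_smul, ← map_sub, ← map_sub, LinearIsometryEquiv.norm_map,
    LinearIsometryEquiv.norm_map, LinearIsometryEquiv.norm_map, LinearIsometryEquiv.norm_map,
    sub_sub_cancel, show z + (z - w) = -(w - (2 : ℝ) • z) by module, norm_neg, mul_comm ‖w‖]

theorem norm_gradient_Phi_right {ξ η : EuclideanSpace ℝ (Fin 2)} (hη : η ≠ 0) (hξη : ξ ≠ η) :
    ‖gradient (fun η' ↦ Phi ξ η') η‖ = ‖ξ - (2 : ℝ) • η‖ * ‖ξ‖ / (‖η‖ ^ 2 * ‖ξ - η‖ ^ 2) := by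
  obtain ⟨z, rfl⟩ := orthonormalBasisOneI.repr.surjective ξ
  obtain ⟨w, rfl⟩ := orthonormalBasisOneI.repr.surjective η
  have hw : w ≠ 0 := by rintro rfl; simp at hη
  have hzw : z - w ≠ 0 := sub_ne_zero.mpr (by rintro rfl; exact hξη rfl)
  rw [(hasGradientAt_Phi_right hw hzw).gradient, LinearIsometryEquiv.norm_map, norm_conj,
    norm_inv_sq_sub_inv_sq hzw hw, ← map_smul, ← map_sub, ← map_sub, LinearIsometryEquiv.norm_map,
    LinearIsometryEquiv.norm_map, LinearIsometryEquiv.norm_map, LinearIsometryEquiv.norm_map,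
    sub_add_cancel, show z - w - w = z - (2 : ℝ) • w by module]

/-- |∇_ξ Φ(ξ,η)| = |η−2ξ|·|η| / (|ξ−η|²·|ξ|²), and consequently
|∇_ξΦ|/|∇_ηΦ| = (|η−2ξ|·|η|³)/(|ξ−2η|·|ξ|³) whenever additionally ξ ≠ 2η. -/
theorem norm_gradient_xi_Phi (ξ η : EuclideanSpace ℝ (Fin 2))
    (hξ : ξ ≠ 0) (hη : η ≠ 0) (hξη : ξ ≠ η) :
    ‖gradient (fun ξ' => Phi ξ' η) ξ‖ =
      ‖η - (2 : ℝ) • ξ‖ * ‖η‖ / (‖ξ - η‖ ^ 2 * ‖ξ‖ ^ 2) ∧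
    (ξ ≠ (2 : ℝ) • η →
      ‖gradient (fun ξ' => Phi ξ' η) ξ‖ / ‖gradient (fun η' => Phi ξ η') η‖ =
        (‖η - (2 : ℝ) • ξ‖ * ‖η‖ ^ 3) / (‖ξ - (2 : ℝ) • η‖ * ‖ξ‖ ^ 3)) := by
  refine ⟨norm_gradient_Phi_left hξ hξη, fun hξ2η ↦ ?_⟩
  rw [norm_gradient_Phi_left hξ hξη, norm_gradient_Phi_right hη hξη]
  have : ‖ξ - (2 : ℝ) • η‖ ≠ 0 := norm_ne_zero_iff.mpr (sub_ne_zero.mpr hξ2η)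
  have : ‖ξ - η‖ ≠ 0 := norm_ne_zero_iff.mpr (sub_ne_zero.mpr hξη)
  have : ‖ξ‖ ≠ 0 := norm_ne_zero_iff.mpr hξ
  have : ‖η‖ ≠ 0 := norm_ne_zero_iff.mpr hη
  field_simp
end

section
/- Let m(ξ,η) = (ξ₂η₁ − ξ₁η₂)/|η|² and Φ(ξ,η) = ξ₁/|ξ|² − (ξ₁−η₁)/|ξ−η|² − η₁/|η|². Suppose ξ, η ∈ ℝ² satisfy η ≠ 0, |ξ−2η| ≤ |η|/1000, |ξ₁| ≥ |η₁|/100, |η|/100 ≤ |ξ| ≤ 100|η|, and |η|/10000 ≤ |ξ−η| ≤ 10000|η|. Then there is an absolute constant C > 0 with |m(ξ,η)| / |Φ(ξ,η)| ≤ C|η|. -/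
/-- The null-form multiplier m(ξ,η) = (ξ₂η₁ − ξ₁η₂)/|η|². -/
noncomputable def nullForm (ξ η : EuclideanSpace ℝ (Fin 2)) : ℝ :=
  (ξ 1 * η 0 - ξ 0 * η 1) / ‖η‖ ^ 2

/-!
Write `ξ = 2η + ε` with `‖ε‖ ≤ ‖η‖/1000`. Then `‖ξ‖ ≈ 2‖η‖` and `‖ξ - η‖ ≈ ‖η‖`, so in
`‖η‖²Φ = ξ₁(‖η‖²/‖ξ‖² - ‖η‖²/‖ξ-η‖²) + η₁(‖η‖²/‖ξ-η‖² - 1)` the first coefficient is about `-3/4`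
and the second is tiny; as `|η₁| ≤ 100|ξ₁|` this gives `|ξ₁| ≤ 2‖η‖²|Φ|`. The cross product
`ξ₂η₁ - ξ₁η₂ = ε₂η₁ - ε₁η₂` is `O(‖η‖|ξ₁|)`, so `|m| = O(|ξ₁|/‖η‖)`.
-/

section TwoSmul

variable {E : Type*} [SeminormedAddCommGroup E] [NormedSpace ℝ E] {ξ η : E} {δ : ℝ}

theorem two_mul_norm_sub_le_norm_of_norm_sub_two_smul_le (h : ‖ξ - (2 : ℝ) • η‖ ≤ δ) :
    2 * ‖η‖ - δ ≤ ‖ξ‖ := by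
  have := norm_sub_norm_le ((2 : ℝ) • η) ξ
  rw [norm_sub_rev, norm_smul, Real.norm_two] at this
  linarith

theorem abs_norm_sub_sub_norm_le_of_norm_sub_two_smul_le (h : ‖ξ - (2 : ℝ) • η‖ ≤ δ) :
    |‖ξ - η‖ - ‖η‖| ≤ δ := by
  refine (abs_norm_sub_norm_le _ _).trans (le_of_eq_of_le ?_ h)
  rw [two_smul, sub_sub]

end TwoSmul

theorem abs_mul_sub_le_abs_mul_add {x y p q K : ℝ} (hy : |y| ≤ K * |x|) :
    |x| * (|p| - K * |q|) ≤ |x * p + y * q| := by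
  have hyq : |y * q| ≤ K * |x| * |q| := by
    rw [abs_mul]; exact mul_le_mul_of_nonneg_right hy (abs_nonneg q)
  have := abs_sub_abs_le_abs_add (x * p) (y * q)
  rw [abs_mul] at this
  nlinarith

theorem sq_div_sq_bounds {r a b : ℝ} (hr : 0 < r) (ha : 1.999 * r ≤ a) (hb : |b - r| ≤ r / 1000) :
    0.74 ≤ r ^ 2 / b ^ 2 - r ^ 2 / a ^ 2 ∧ |r ^ 2 / b ^ 2 - 1| ≤ 0.0024 := by
  obtain ⟨hb₁, hb₂⟩ := abs_le.1 hb
  have ha0 : 0 < a := by linarith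
  have hb0 : 0 < b := by linarith
  have hua : r ^ 2 / a ^ 2 ≤ 0.2503 := by
    rw [div_le_iff₀ (by positivity)]; nlinarith
  have hvl : 0.9979 ≤ r ^ 2 / b ^ 2 := by
    rw [le_div_iff₀ (by positivity)]; nlinarith
  have hvu : r ^ 2 / b ^ 2 ≤ 1.0024 := by
    rw [div_le_iff₀ (by positivity)]; nlinarith
  exact ⟨by linarith, abs_le.2 ⟨by linarith, by linarith⟩⟩

theorem sq_norm_mul_Phi (ξ η : EuclideanSpace ℝ (Fin 2)) (hη : η ≠ 0) :
    ‖η‖ ^ 2 * Phi ξ η = ξ 0 * (‖η‖ ^ 2 / ‖ξ‖ ^ 2 - ‖η‖ ^ 2 / ‖ξ - η‖ ^ 2)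
      + η 0 * (‖η‖ ^ 2 / ‖ξ - η‖ ^ 2 - 1) := by
  have : ‖η‖ ≠ 0 := norm_ne_zero_iff.2 hη
  unfold Phi
  field_simp
  ring

theorem abs_apply_zero_le_Phi {ξ η : EuclideanSpace ℝ (Fin 2)} (hη : η ≠ 0)
    (hclose : ‖ξ - (2 : ℝ) • η‖ ≤ ‖η‖ / 1000) (hcomp : |η 0| / 100 ≤ |ξ 0|) :
    |ξ 0| ≤ 2 * ‖η‖ ^ 2 * |Phi ξ η| := by
  have hr : 0 < ‖η‖ := norm_pos_iff.2 hη
  obtain ⟨hp, hq⟩ := sq_div_sq_bounds (a := ‖ξ‖) hr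
    (by linarith [two_mul_norm_sub_le_norm_of_norm_sub_two_smul_le hclose])
    (abs_norm_sub_sub_norm_le_of_norm_sub_two_smul_le hclose)
  have hlower := abs_mul_sub_le_abs_mul_add (x := ξ 0) (y := η 0)
    (p := ‖η‖ ^ 2 / ‖ξ‖ ^ 2 - ‖η‖ ^ 2 / ‖ξ - η‖ ^ 2) (q := ‖η‖ ^ 2 / ‖ξ - η‖ ^ 2 - 1)
    (K := 100) (by linarith)
  rw [← sq_norm_mul_Phi ξ η hη, abs_mul, abs_of_pos (by positivity : 0 < ‖η‖ ^ 2), abs_sub_comm,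
    abs_of_pos (by linarith : (0 : ℝ) < ‖η‖ ^ 2 / ‖ξ - η‖ ^ 2 - ‖η‖ ^ 2 / ‖ξ‖ ^ 2)] at hlower
  have hgap : 1 / 2 ≤ ‖η‖ ^ 2 / ‖ξ - η‖ ^ 2 - ‖η‖ ^ 2 / ‖ξ‖ ^ 2
      - 100 * |‖η‖ ^ 2 / ‖ξ - η‖ ^ 2 - 1| := by
    linarith
  nlinarith [mul_le_mul_of_nonneg_left hgap (abs_nonneg (ξ 0))]

theorem abs_cross_le {ξ η : EuclideanSpace ℝ (Fin 2)}
    (hclose : ‖ξ - (2 : ℝ) • η‖ ≤ ‖η‖ / 1000) (hcomp : |η 0| / 100 ≤ |ξ 0|) :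
    |ξ 1 * η 0 - ξ 0 * η 1| ≤ 202 * ‖η‖ * |ξ 0| := by
  set ε := ξ - (2 : ℝ) • η
  have hε1 : |ε 1| ≤ ‖η‖ / 1000 := (PiLp.norm_apply_le ε 1).trans hclose
  have hε0 : |ε 0| ≤ 201 * |ξ 0| := by
    simp only [ε, PiLp.sub_apply, PiLp.smul_apply, smul_eq_mul]
    have := abs_sub (ξ 0) (2 * η 0)
    rw [abs_mul, abs_two] at this
    linarith
  have hη1 : |η 1| ≤ ‖η‖ := PiLp.norm_apply_le η 1
  have hcross : ξ 1 * η 0 - ξ 0 * η 1 = ε 1 * η 0 - ε 0 * η 1 := by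
    simp only [ε, PiLp.sub_apply, PiLp.smul_apply, smul_eq_mul]; ring
  calc |ξ 1 * η 0 - ξ 0 * η 1| ≤ |ε 1| * |η 0| + |ε 0| * |η 1| := by
        rw [hcross, ← abs_mul, ← abs_mul]; exact abs_sub _ _
    _ ≤ ‖η‖ / 1000 * (100 * |ξ 0|) + 201 * |ξ 0| * ‖η‖ := by
        gcongr
        linarith
    _ ≤ 202 * ‖η‖ * |ξ 0| := by nlinarith [norm_nonneg η, abs_nonneg (ξ 0)]

theorem abs_nullForm_mul_norm_le {ξ η : EuclideanSpace ℝ (Fin 2)} (hη : η ≠ 0)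
    (hclose : ‖ξ - (2 : ℝ) • η‖ ≤ ‖η‖ / 1000) (hcomp : |η 0| / 100 ≤ |ξ 0|) :
    |nullForm ξ η| * ‖η‖ ≤ 202 * |ξ 0| := by
  have hr : 0 < ‖η‖ := norm_pos_iff.2 hη
  rw [nullForm, abs_div, abs_of_pos (by positivity : 0 < ‖η‖ ^ 2), div_mul_eq_mul_div,
    div_le_iff₀ (by positivity)]
  nlinarith [abs_cross_le hclose hcomp, abs_nonneg (ξ 0)]

/-- In Region 1, Case 2, Subcase A: there is an absolute constant C > 0 with
|m(ξ,η)|/|Φ(ξ,η)| ≤ C|η|. -/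
theorem nullForm_div_Phi_bound :
    ∃ C > (0 : ℝ), ∀ ξ η : EuclideanSpace ℝ (Fin 2), η ≠ 0 →
      ‖ξ - (2 : ℝ) • η‖ ≤ ‖η‖ / 1000 →
      |η 0| / 100 ≤ |ξ 0| →
      ‖η‖ / 100 ≤ ‖ξ‖ → ‖ξ‖ ≤ 100 * ‖η‖ →
      ‖η‖ / 10000 ≤ ‖ξ - η‖ → ‖ξ - η‖ ≤ 10000 * ‖η‖ →
      |nullForm ξ η| / |Phi ξ η| ≤ C * ‖η‖ := by
  refine ⟨404, by norm_num, fun ξ η hη hclose hcomp _ _ _ _ => ?_⟩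
  have hr : 0 < ‖η‖ := norm_pos_iff.2 hη
  have hm := abs_nullForm_mul_norm_le hη hclose hcomp
  have hΦ := abs_apply_zero_le_Phi hη hclose hcomp
  rcases eq_or_ne (Phi ξ η) 0 with h0 | h0
  · simp only [h0, abs_zero, div_zero]; positivity
  rw [div_le_iff₀ (abs_pos.2 h0)]
  refine le_of_mul_le_mul_right ?_ hr
  nlinarith
end
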